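/- Let 1 ≤ m ≤ M ≤ N, let Ω_N ⊆ ℂ^N and Ω_M ⊆ ℂ^M be open sets, and let f : Ω_N → Ω_M be given by f(z) = cAz + w_0, where c ∈ ℝ, w_0 ∈ ℂ^M and A is an M×N homothety-projection matrix. Then for every C² function φ : Ω_M → ℝ whose complex Hessian H_φ(w) has its eigenvalue vector in Λ_{m,M} for every w ∈ Ω_M, the complex Hessian H_{φ∘f}(z) has its eigenvalue vector in Λ_{m,N} for every z ∈ Ω_N. (Theorem C, implication (2a)⇒(1), with smooth test functions.) -/

import Mathlib

/-!
Write `f z = P z + w₀` with `P = c A`. By the chain rule the complex Hessian of `φ ∘ f` at `z` is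
`B H Bᴴ`, where `H` is the complex Hessian of `φ` at `f z` and `B = Pᵀ`. Orthogonality and equal
length of the rows of `A` give `Bᴴ B = t • 1` with `t = c² ‖A₁‖² ≥ 0`, so by Sylvester's
determinant identity the eigenvalues of `B H Bᴴ` are those of `t H` together with `N - M` zeros.
Extra zeros do not change `σ_l` for `l ≥ 1`, and scaling by `t` multiplies `σ_l` by `tˡ ≥ 0`.
-/

/-- The complex Hessian matrix of `φ : ℂ^m → ℝ` at `w`, with entries
`(∂²φ/∂z_j∂z̄_k)(w)` expressed through the second real Fréchet derivative. -/
noncomputable def complexHessian {m : ℕ} (φ : (Fin m → ℂ) → ℝ) (w : Fin m → ℂ) :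
    Matrix (Fin m) (Fin m) ℂ :=
  Matrix.of fun j k =>
    (((1 / 4 : ℝ) * (fderiv ℝ (fderiv ℝ φ) w (Pi.single j 1) (Pi.single k 1)
        + fderiv ℝ (fderiv ℝ φ) w (Pi.single j Complex.I) (Pi.single k Complex.I)) : ℝ) : ℂ)
    + Complex.I * (((1 / 4 : ℝ) *
        (fderiv ℝ (fderiv ℝ φ) w (Pi.single j 1) (Pi.single k Complex.I)
        - fderiv ℝ (fderiv ℝ φ) w (Pi.single j Complex.I) (Pi.single k 1)) : ℝ) : ℂ)

/-- The `l`-th elementary symmetric polynomial of `x ∈ ℝ^N`. -/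
def esymm {N : ℕ} (l : ℕ) (x : Fin N → ℝ) : ℝ :=
  ∑ s ∈ Finset.powersetCard l (Finset.univ : Finset (Fin N)), ∏ j ∈ s, x j

/-- The cone `Λ_{k,N} = {x ∈ ℝ^N : σ_l(x) ≥ 0, l = 1,…,k}`. -/
def Lambda (k N : ℕ) : Set (Fin N → ℝ) :=
  {x | ∀ l, 1 ≤ l → l ≤ k → 0 ≤ esymm l x}

/-- An `M × N` complex matrix is a homothety-projection matrix if its rows are pairwise
orthogonal and all have the same Euclidean norm. -/
def IsHomothetyProjection {M N : ℕ} (A : Matrix (Fin M) (Fin N) ℂ) : Prop :=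
  (∀ j k, j ≠ k → ∑ i, A j i * (starRingEnd ℂ) (A k i) = 0) ∧
  ∀ j k, ∑ i, ‖A j i‖ ^ 2 = ∑ i, ‖A k i‖ ^ 2

open Complex Matrix Polynomial Topology

namespace Multiset

variable {R : Type*} [CommSemiring R]

lemma esymm_cons_succ (a : R) (s : Multiset R) (k : ℕ) :
    (a ::ₘ s).esymm (k + 1) = s.esymm (k + 1) + a * s.esymm k := by
  simp [esymm, powersetCard_cons, map_map, sum_map_mul_left]

lemma esymm_replicate_zero_add {l : ℕ} (hl : l ≠ 0) (k : ℕ) (s : Multiset R) :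
    (replicate k 0 + s).esymm l = s.esymm l := by
  obtain ⟨l, rfl⟩ := Nat.exists_eq_succ_of_ne_zero hl
  induction k with
  | zero => simp
  | succ k ih => rw [replicate_succ, cons_add, esymm_cons_succ, ih, zero_mul, add_zero]

end Multiset

lemma esymm_eq_esymm_map_val {N : ℕ} (l : ℕ) (x : Fin N → ℝ) :
    esymm l x = (Finset.univ.val.map x).esymm l :=
  (Finset.esymm_map_val x _ l).symm

lemma mem_Lambda_of_map_eq_replicate_zero_add {m M N k : ℕ} {x : Fin N → ℝ} {y : Fin M → ℝ}
    {t : ℝ} (ht : 0 ≤ t) (hy : y ∈ Lambda m M)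
    (hxy : Finset.univ.val.map x
      = Multiset.replicate k 0 + Finset.univ.val.map (fun i => t * y i)) :
    x ∈ Lambda m N := by
  intro l hl hlm
  have hscale : Finset.univ.val.map (fun i => t * y i) = (Finset.univ.val.map y).map (t • ·) := by
    simp [Function.comp_def]
  rw [esymm_eq_esymm_map_val, hxy, Multiset.esymm_replicate_zero_add (by omega), hscale,
    ← Multiset.pow_smul_esymm, ← esymm_eq_esymm_map_val, smul_eq_mul]
  exact mul_nonneg (pow_nonneg ht l) (hy l hl hlm)

namespace Matrix.IsHermitian

variable {n : Type*} [Fintype n] [DecidableEq n] {H : Matrix n n ℂ}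

lemma charpoly_real_smul (hH : H.IsHermitian) (t : ℝ) :
    ((t : ℂ) • H).charpoly = ∏ i, (X - C ((t * hH.eigenvalues i : ℝ) : ℂ)) := by
  conv_lhs => rw [hH.spectral_theorem, Unitary.conjStarAlgAut_apply, Matrix.mul_assoc,
    ← Matrix.mul_smul, charpoly_mul_comm, Matrix.smul_mul, Matrix.mul_assoc]
  rw [Unitary.coe_star_mul_self, Matrix.mul_one, ← diagonal_smul, charpoly_diagonal]
  simp

lemma eigenvalues_mul_mul_conjTranspose {m : Type*} [Fintype m] [DecidableEq m]
    (hH : H.IsHermitian) {B : Matrix m n ℂ} {t : ℝ} (hB : Bᴴ * B = (t : ℂ) • 1)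
    (hG : (B * H * Bᴴ).IsHermitian) (hnm : Fintype.card n ≤ Fintype.card m) :
    Finset.univ.val.map hG.eigenvalues = Multiset.replicate (Fintype.card m - Fintype.card n) 0
      + Finset.univ.val.map (fun i => t * hH.eigenvalues i) := by
  have hcharpoly : (B * H * Bᴴ).charpoly
      = X ^ (Fintype.card m - Fintype.card n) * ∏ i, (X - C ((t * hH.eigenvalues i : ℝ) : ℂ)) := by
    rw [Matrix.mul_assoc, charpoly_mul_comm_of_le _ _ hnm, Matrix.mul_assoc, hB,
      Matrix.mul_smul, Matrix.mul_one, hH.charpoly_real_smul]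
  have hprod_ne : ∏ i, (X - C ((t * hH.eigenvalues i : ℝ) : ℂ)) ≠ 0 :=
    (monic_prod_of_monic _ _ fun _ _ => monic_X_sub_C _).ne_zero
  have hroots := congrArg Polynomial.roots hcharpoly
  rw [hG.roots_charpoly_eq_eigenvalues, roots_mul (mul_ne_zero (pow_ne_zero _ X_ne_zero) hprod_ne),
    roots_X_pow, roots_prod _ _ hprod_ne] at hroots
  simp only [roots_X_sub_C, Multiset.bind_singleton, Multiset.nsmul_singleton] at hroots
  apply Multiset.map_injective Complex.ofReal_injective
  simpa [Multiset.map_map] using hroots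

end Matrix.IsHermitian

lemma IsHomothetyProjection.exists_mul_conjTranspose_eq {M N : ℕ}
    {A : Matrix (Fin M) (Fin N) ℂ} (hA : IsHomothetyProjection A) :
    ∃ r : ℝ, 0 ≤ r ∧ A * Aᴴ = (r : ℂ) • 1 := by
  rcases isEmpty_or_nonempty (Fin M) with hM | ⟨⟨j₀⟩⟩
  · exact ⟨0, le_rfl, Subsingleton.elim _ _⟩
  refine ⟨∑ i, ‖A j₀ i‖ ^ 2, by positivity, ?_⟩
  ext j k
  rw [mul_apply, Matrix.smul_apply, one_apply]
  by_cases hjk : j = k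
  · subst hjk
    simp [RCLike.mul_conj, ← hA.2 j j₀]
  · simpa [hjk] using hA.1 j k hjk

section sesqPart

variable {E : Type*} [AddCommGroup E] [Module ℂ E] [Module ℝ E] [IsScalarTower ℝ ℂ E]

lemma smul_eq_re_smul_add_im_smul_I_smul (a : ℂ) (w : E) :
    a • w = a.re • w + a.im • (I • w) := by
  rw [← algebraMap_smul ℂ a.re, ← algebraMap_smul ℂ a.im, smul_smul, ← add_smul]
  congr 1
  simp

/-- The `(1,1)`-part of a real bilinear form, as a sesquilinear form: applied to the real Hessian
of `φ` it is the Levi form `∂∂̄φ`. -/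
noncomputable def sesqPart (D : E →ₗ[ℝ] E →ₗ[ℝ] ℝ) : E →ₗ[ℂ] E →ₗ⋆[ℂ] ℂ :=
  LinearMap.mk₂'ₛₗ (RingHom.id ℂ) (starRingEnd ℂ)
    (fun u v => (((1 / 4 : ℝ) * (D u v + D (I • u) (I • v)) : ℝ) : ℂ)
      + I * (((1 / 4 : ℝ) * (D u (I • v) - D (I • u) v) : ℝ) : ℂ))
    (by intros; simp only [smul_add, map_add, LinearMap.add_apply]; push_cast; ring)
    (by
      intro a u v
      rw [smul_comm I a]
      simp only [smul_eq_re_smul_add_im_smul_I_smul a, smul_smul, I_mul_I, neg_one_smul, map_add,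
        map_smul, map_neg, LinearMap.add_apply, LinearMap.smul_apply, LinearMap.neg_apply,
        smul_eq_mul, RingHom.id_apply]
      apply Complex.ext <;> simp <;> ring)
    (by intros; simp only [smul_add, map_add]; push_cast; ring)
    (by
      intro a u v
      rw [smul_comm I a]
      simp only [smul_eq_re_smul_add_im_smul_I_smul a, smul_smul, I_mul_I, neg_one_smul, map_add,
        map_smul, map_neg, smul_eq_mul]
      apply Complex.ext <;> simp <;> ring)

lemma sesqPart_apply (D : E →ₗ[ℝ] E →ₗ[ℝ] ℝ) (u v : E) :
    sesqPart D u v = (((1 / 4 : ℝ) * (D u v + D (I • u) (I • v)) : ℝ) : ℂ)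
      + I * (((1 / 4 : ℝ) * (D u (I • v) - D (I • u) v) : ℝ) : ℂ) :=
  rfl

lemma sesqPart_compl₁₂ {E' : Type*} [AddCommGroup E'] [Module ℂ E'] [Module ℝ E']
    [IsScalarTower ℝ ℂ E'] (D : E →ₗ[ℝ] E →ₗ[ℝ] ℝ) (L : E' →ₗ[ℂ] E) :
    sesqPart (D.compl₁₂ (L.restrictScalars ℝ) (L.restrictScalars ℝ))
      = ((sesqPart D).comp L).compl₂ L := by
  ext u v
  simp [sesqPart_apply]

end sesqPart

lemma LinearMap.toMatrixₛₗ₂'_comp_mulVecLin_compl₂_mulVecLin {m n : Type*} [Fintype m]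
    [DecidableEq m] [Fintype n] [DecidableEq n] (S : (m → ℂ) →ₗ[ℂ] (m → ℂ) →ₗ⋆[ℂ] ℂ)
    (P : Matrix m n ℂ) :
    LinearMap.toMatrixₛₗ₂' ℂ ((S.comp P.mulVecLin).compl₂ P.mulVecLin)
      = Pᵀ * LinearMap.toMatrixₛₗ₂' ℂ S * Pᵀᴴ := by
  obtain ⟨H, rfl⟩ : ∃ H, Matrix.toLinearMapₛₗ₂' ℂ (RingHom.id ℂ) (starRingEnd ℂ) H = S :=
    ⟨_, Matrix.toLinearMapₛₗ₂'_toMatrix' _ _ S⟩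
  ext j k
  simp only [LinearMap.toMatrixₛₗ₂'_apply, LinearMap.compl₂_apply, LinearMap.comp_apply,
    Matrix.mulVecLin_apply, Matrix.mulVec_single_one, Matrix.toLinearMapₛₗ₂'_apply,
    LinearMap.toMatrix'_toLinearMapₛₗ₂', Matrix.mul_apply, Matrix.conjTranspose_apply,
    Matrix.transpose_apply, Matrix.col_apply, RingHom.id_apply, smul_eq_mul, Finset.sum_mul,
    RCLike.star_def]
  rw [Finset.sum_comm]
  exact Finset.sum_congr rfl fun p _ => Finset.sum_congr rfl fun q _ => by ring

lemma fderiv_fderiv_comp_of_hasFDerivAt {𝕜 E F G : Type*} [NontriviallyNormedField 𝕜]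
    [NormedAddCommGroup E] [NormedSpace 𝕜 E] [NormedAddCommGroup F] [NormedSpace 𝕜 F]
    [NormedAddCommGroup G] [NormedSpace 𝕜 G] {φ : F → G} {f : E → F} {L : E →L[𝕜] F}
    (hf : ∀ x, HasFDerivAt f L x) {z : E} (hφ : ContDiffAt 𝕜 2 φ (f z)) (u v : E) :
    fderiv 𝕜 (fderiv 𝕜 (φ ∘ f)) z u v = fderiv 𝕜 (fderiv 𝕜 φ) (f z) (L u) (L v) := by
  have hfirst : fderiv 𝕜 (φ ∘ f) =ᶠ[𝓝 z] fun x => (fderiv 𝕜 φ (f x)).comp L := by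
    have hdiff : ∀ᶠ y in 𝓝 (f z), DifferentiableAt 𝕜 φ y :=
      (hφ.eventually (by simp)).mono fun y hy => hy.differentiableAt (by simp)
    filter_upwards [(hf z).continuousAt.eventually hdiff] with x hx
    exact (hx.hasFDerivAt.comp x (hf x)).fderiv
  have hsecond : HasFDerivAt (fun x => (fderiv 𝕜 φ (f x)).comp L) _ z :=
    (((hφ.fderiv_right le_rfl).differentiableAt one_ne_zero).hasFDerivAt.comp z
      (hf z)).clm_comp (hasFDerivAt_const L z)
  rw [hfirst.fderiv_eq, hsecond.fderiv]
  simp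

lemma complexHessian_eq_toMatrixₛₗ₂' {M : ℕ} (φ : (Fin M → ℂ) → ℝ) (w : Fin M → ℂ) :
    complexHessian φ w
      = LinearMap.toMatrixₛₗ₂' ℂ (sesqPart (fderiv ℝ (fderiv ℝ φ) w).toLinearMap₁₂) := by
  ext j k
  simp [complexHessian, sesqPart_apply, ← Pi.single_smul]

lemma complexHessian_comp_affine {M N : ℕ} (φ : (Fin M → ℂ) → ℝ) (P : Matrix (Fin M) (Fin N) ℂ)
    (w₀ : Fin M → ℂ) (z : Fin N → ℂ) (hφ : ContDiffAt ℝ 2 φ (P *ᵥ z + w₀)) :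
    complexHessian (φ ∘ fun x => P *ᵥ x + w₀) z
      = Pᵀ * complexHessian φ (P *ᵥ z + w₀) * Pᵀᴴ := by
  set L : (Fin N → ℂ) →L[ℝ] (Fin M → ℂ) := (P.mulVecLin.restrictScalars ℝ).toContinuousLinearMap
  have hf : ∀ x, HasFDerivAt (fun x => P *ᵥ x + w₀) L x := fun x => L.hasFDerivAt.add_const w₀
  have hD : (fderiv ℝ (fderiv ℝ (φ ∘ fun x => P *ᵥ x + w₀)) z).toLinearMap₁₂
      = (fderiv ℝ (fderiv ℝ φ) (P *ᵥ z + w₀)).toLinearMap₁₂.compl₁₂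
          (P.mulVecLin.restrictScalars ℝ) (P.mulVecLin.restrictScalars ℝ) :=
    LinearMap.ext₂ fun u v => fderiv_fderiv_comp_of_hasFDerivAt hf hφ u v
  rw [complexHessian_eq_toMatrixₛₗ₂', complexHessian_eq_toMatrixₛₗ₂', hD, sesqPart_compl₁₂,
    LinearMap.toMatrixₛₗ₂'_comp_mulVecLin_compl₂_mulVecLin]

theorem theoremC_2a_implies_1_general (N M : ℕ) (m : ℕ)
    (hMN : M ≤ N)
    (ΩN : Set (Fin N → ℂ)) (ΩM : Set (Fin M → ℂ))
    (hΩM : IsOpen ΩM)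
    (f : (Fin N → ℂ) → (Fin M → ℂ)) (hmaps : Set.MapsTo f ΩN ΩM)
    (c : ℝ) (w₀ : Fin M → ℂ) (A : Matrix (Fin M) (Fin N) ℂ)
    (hA : IsHomothetyProjection A)
    (hf : ∀ z, f z = (c : ℂ) • A.mulVec z + w₀) :
    ∀ φ : (Fin M → ℂ) → ℝ, ContDiffOn ℝ 2 φ ΩM →
      (∀ w ∈ ΩM, ∃ hH : (complexHessian φ w).IsHermitian, hH.eigenvalues ∈ Lambda m M) →
      (∀ z ∈ ΩN, ∃ hH : (complexHessian (φ ∘ f) z).IsHermitian,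
        hH.eigenvalues ∈ Lambda m N) := by
  intro φ hφ hΛ z hz
  set P : Matrix (Fin M) (Fin N) ℂ := (c : ℂ) • A
  obtain rfl : f = fun x => P *ᵥ x + w₀ := funext fun x => by rw [hf, smul_mulVec]
  obtain ⟨hH, hHΛ⟩ := hΛ _ (hmaps hz)
  obtain ⟨r, hr, hAA⟩ := hA.exists_mul_conjTranspose_eq
  have hPP : Pᵀᴴ * Pᵀ = ((c ^ 2 * r : ℝ) : ℂ) • 1 := by
    rw [conjTranspose_transpose_eq_transpose_conjTranspose, ← transpose_mul, conjTranspose_smul,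
      Matrix.smul_mul, Matrix.mul_smul, hAA, smul_smul, smul_smul, transpose_smul, transpose_one,
      star_def, conj_ofReal]
    push_cast
    rw [sq]
  rw [complexHessian_comp_affine φ P w₀ z (hφ.contDiffAt (hΩM.mem_nhds (hmaps hz)))]
  have hG := isHermitian_mul_mul_conjTranspose Pᵀ hH
  exact ⟨hG, mem_Lambda_of_map_eq_replicate_zero_add (by positivity) hHΛ
    (hH.eigenvalues_mul_mul_conjTranspose hPP hG (by simpa using hMN))⟩

/-- Theorem C, implication (2a) ⇒ (1), with C² test functions: if `f(z) = cAz + w₀`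
with `A` a homothety-projection matrix, then `f` is an `(m,m)`-subharmonic morphism. -/
theorem theoremC_2a_implies_1 (N M : ℕ) (m : ℕ)
    (hm1 : 1 ≤ m) (hmM : m ≤ M) (hMN : M ≤ N)
    (ΩN : Set (Fin N → ℂ)) (ΩM : Set (Fin M → ℂ))
    (hΩN : IsOpen ΩN) (hΩM : IsOpen ΩM)
    (f : (Fin N → ℂ) → (Fin M → ℂ)) (hmaps : Set.MapsTo f ΩN ΩM)
    (c : ℝ) (w₀ : Fin M → ℂ) (A : Matrix (Fin M) (Fin N) ℂ)
    (hA : IsHomothetyProjection A)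
    (hf : ∀ z, f z = (c : ℂ) • A.mulVec z + w₀) :
    ∀ φ : (Fin M → ℂ) → ℝ, ContDiffOn ℝ 2 φ ΩM →
      (∀ w ∈ ΩM, ∃ hH : (complexHessian φ w).IsHermitian, hH.eigenvalues ∈ Lambda m M) →
      (∀ z ∈ ΩN, ∃ hH : (complexHessian (φ ∘ f) z).IsHermitian,
        hH.eigenvalues ∈ Lambda m N) :=
  theoremC_2a_implies_1_general N M m hMN ΩN ΩM hΩM f hmaps c w₀ A hA hf
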